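/- arXiv:2011.04639 — 7 statements merged into one kernel-verified Lean document; each statement's English description precedes it below -/
import Mathlib

section
/- Let $X$ be a Banach lattice and suppose there is a sequence $(\phi_n)_{n\in\mathbb{N}}$ of lattice homomorphisms $\phi_n: X\to\mathbb{R}$ which separates the points of $X$. Then $X$ satisfies the $\sigma$-bounded chain condition: there exist sets $\mathcal{F}_n\subseteq X_+\setminus\{0\}$ for $n\ge 2$ with $X_+\setminus\{0\}=\bigcup_{n\ge 2}\mathcal{F}_n$ such that for each $n\ge 2$, any subset $\mathcal{G}\subseteq\mathcal{F}_n$ of cardinality $n$ contains two distinct elements $x,y$ with $x\wedge y\ne 0$. -/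
/-!
A real lattice homomorphism is additive and preserves `⊔`, so by `x ⊓ y + x ⊔ y = x + y` it also
preserves `⊓`; hence it vanishes on one of any two disjoint elements. Let `F n` consist of the
nonzero positive `x` with `φ m x ≠ 0` for some `m < n - 1`. Separation puts every such `x` in some
`F n`, and among `n` elements of `F n` two share an index `m` by pigeonhole, so they are not
disjoint.
-/

section LatticeOrderedGroup

variable {α β F : Type*} [AddCommGroup α] [Lattice α] [AddLeftMono α]
  [AddCommGroup β] [LinearOrder β] [FunLike F α β] [AddMonoidHomClass F α β]

theorem map_inf_of_map_sup {f : F} (hf : ∀ x y, f (x ⊔ y) = max (f x) (f y)) (x y : α) :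
    f (x ⊓ y) = min (f x) (f y) := by
  have h := congrArg f (inf_add_sup x y)
  rw [map_add, map_add, hf, ← min_add_max (f x) (f y)] at h
  exact add_right_cancel h

theorem map_eq_zero_or_map_eq_zero_of_inf_eq_zero {f : F}
    (hf : ∀ x y, f (x ⊔ y) = max (f x) (f y)) {x y : α} (h : x ⊓ y = 0) :
    f x = 0 ∨ f y = 0 := by
  have hmin : min (f x) (f y) = 0 := by rw [← map_inf_of_map_sup hf, h, map_zero]
  rcases min_choice (f x) (f y) with hx | hy
  · exact Or.inl (hx ▸ hmin)
  · exact Or.inr (hy ▸ hmin)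

end LatticeOrderedGroup

theorem Finset.exists_ne_of_rel_same_of_card_lt {α : Type*} {s : Finset α} {k : ℕ}
    {R : α → ℕ → Prop} (hk : k < s.card) (h : ∀ x ∈ s, ∃ m < k, R x m) :
    ∃ x ∈ s, ∃ y ∈ s, x ≠ y ∧ ∃ m, R x m ∧ R y m := by
  choose! g hg using h
  have hmaps : Set.MapsTo g s (Finset.range k) := fun x hx => Finset.mem_range.2 (hg x hx).1
  obtain ⟨x, hx, y, hy, hxy, hgxy⟩ :=
    Finset.exists_ne_map_eq_of_card_lt_of_maps_to (by rwa [Finset.card_range]) hmaps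
  exact ⟨x, hx, y, hy, hxy, g x, (hg x hx).2, hgxy ▸ (hg y hy).2⟩

theorem sigma_bounded_chain_condition_of_separating_homs_general
    {X : Type*} [NormedAddCommGroup X] [Lattice X] [IsOrderedAddMonoid X] [NormedSpace ℝ X]
    (φ : ℕ → X →L[ℝ] ℝ)
    (hlat : ∀ n x y, φ n (x ⊔ y) = max (φ n x) (φ n y))
    (hsep : ∀ x : X, x ≠ 0 → ∃ n, φ n x ≠ 0) :
    ∃ F : ℕ → Set X,
      (∀ n, F n ⊆ {x : X | 0 ≤ x ∧ x ≠ 0}) ∧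
      ({x : X | 0 ≤ x ∧ x ≠ 0} = ⋃ n ∈ {n : ℕ | 2 ≤ n}, F n) ∧
      (∀ n, 2 ≤ n → ∀ G : Finset X, ↑G ⊆ F n → G.card = n →
        ∃ x ∈ G, ∃ y ∈ G, x ≠ y ∧ x ⊓ y ≠ 0) := by
  refine ⟨fun n => {x | (0 ≤ x ∧ x ≠ 0) ∧ ∃ m < n - 1, φ m x ≠ 0}, fun n x hx => hx.1, ?_, ?_⟩
  · ext x
    simp only [Set.mem_ofPred_eq, Set.mem_iUnion, exists_prop]
    constructor
    · intro hx
      obtain ⟨m, hm⟩ := hsep x hx.2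
      exact ⟨m + 2, by omega, hx, m, by omega, hm⟩
    · rintro ⟨n, -, hx, -⟩
      exact hx
  · intro n hn G hG hcard
    obtain ⟨x, hx, y, hy, hxy, m, hmx, hmy⟩ :=
      Finset.exists_ne_of_rel_same_of_card_lt (by omega : n - 1 < G.card) fun x hx => (hG hx).2
    exact ⟨x, hx, y, hy, hxy, fun hdisj =>
      (map_eq_zero_or_map_eq_zero_of_inf_eq_zero (hlat m) hdisj).elim hmx hmy⟩

/-- If a Banach lattice `X` admits a sequence of real-valued lattice homomorphisms
separating its points, then `X` satisfies the σ-bounded chain condition. -/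
theorem sigma_bounded_chain_condition_of_separating_homs
    {X : Type*} [NormedAddCommGroup X] [Lattice X] [HasSolidNorm X] [IsOrderedAddMonoid X] [NormedSpace ℝ X] [CompleteSpace X]
    (φ : ℕ → X →L[ℝ] ℝ)
    (hlat : ∀ n x y, φ n (x ⊔ y) = max (φ n x) (φ n y))
    (hsep : ∀ x : X, x ≠ 0 → ∃ n, φ n x ≠ 0) :
    ∃ F : ℕ → Set X,
      (∀ n, F n ⊆ {x : X | 0 ≤ x ∧ x ≠ 0}) ∧
      ({x : X | 0 ≤ x ∧ x ≠ 0} = ⋃ n ∈ {n : ℕ | 2 ≤ n}, F n) ∧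
      (∀ n, 2 ≤ n → ∀ G : Finset X, ↑G ⊆ F n → G.card = n →
        ∃ x ∈ G, ∃ y ∈ G, x ≠ y ∧ x ⊓ y ≠ 0) :=
  sigma_bounded_chain_condition_of_separating_homs_general φ hlat hsep
end

section
/- Let $K$ and $L$ be compact Hausdorff spaces with $K\subseteq L$, and suppose $S: C(K)\to C(L)$ is a lattice homomorphism such that $S(f)|_K = f$ for every $f\in C(K)$. Assume $S$ is represented as $S(f)(y)=w(y)f(\pi(y))$ for a continuous $w:L\to[0,\infty)$ and a map $\pi:L\to K$ continuous on $L\setminus w^{-1}(\{0\})$. Then $w(x)=1$ and $\pi(x)=x$ for every $x\in K$; consequently $K$ is a retract of the open set $L\setminus w^{-1}(\{0\})\supseteq K$, i.e., $K$ is a neighborhood retract of $L$. -/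
/-!
On `K` the representation and the section property combine to `w x * f (π x) = f x` for every
`f ∈ C(K)`. Taking `f = 1` gives `w x = 1`; then `f (π x) = f x` for all `f`, and since continuous
functions separate the points of the completely regular space `K`, `π x = x`. The set `{w ≠ 0}` is
open because `w` is continuous, and it contains `K` because `w = 1` there.
-/

lemma eq_of_forall_continuousMap_apply_eq {X : Type*} [TopologicalSpace X] [T35Space X]
    {a b : X} (h : ∀ f : C(X, ℝ), f a = f b) : a = b := by
  by_contra hab
  obtain ⟨f, hf, hne⟩ := separatesPoints_continuous_of_t35Space hab
  exact hne (h ⟨f, hf⟩)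

lemma eq_one_and_eq_self_of_forall_mul_comp_eq {X : Type*} [TopologicalSpace X] [T35Space X]
    {a : X → ℝ} {σ : X → X} (h : ∀ (f : C(X, ℝ)) (x : X), a x * f (σ x) = f x) (x : X) :
    a x = 1 ∧ σ x = x := by
  have ha : a x = 1 := by simpa using h 1 x
  refine ⟨ha, eq_of_forall_continuousMap_apply_eq fun f => ?_⟩
  simpa [ha] using h f x

theorem neighborhood_retract_of_lattice_section_general
    {L : Type*} [TopologicalSpace L] [CompactSpace L] [T2Space L]
    (K : Set L)
    (S : C(↥K, ℝ) →ₗ[ℝ] C(L, ℝ))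
    (w : C(L, ℝ))
    (π : L → ↥K)
    (hπcont : ContinuousOn (fun y => (π y : L)) {y : L | w y ≠ 0})
    (hrep : ∀ (f : C(↥K, ℝ)) (y : L), S f y = w y * f (π y))
    (hsection : ∀ (f : C(↥K, ℝ)) (x : ↥K), S f (x : L) = f x) :
    (∀ x : ↥K, w (x : L) = 1 ∧ π (x : L) = x) ∧
    (IsOpen {y : L | w y ≠ 0} ∧ K ⊆ {y : L | w y ≠ 0} ∧
      ContinuousOn (fun y => (π y : L)) {y : L | w y ≠ 0} ∧
      (∀ y ∈ {y : L | w y ≠ 0}, (π y : L) ∈ K) ∧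
      (∀ x : ↥K, (π (x : L) : L) = (x : L))) := by
  have hfix : ∀ x : ↥K, w (x : L) = 1 ∧ π (x : L) = x :=
    eq_one_and_eq_self_of_forall_mul_comp_eq fun f x => (hrep f x).symm.trans (hsection f x)
  refine ⟨hfix, isOpen_ne_fun w.continuous continuous_const, fun y hy => ?_, hπcont,
    fun y _ => (π y).2, fun x => congrArg Subtype.val (hfix x).2⟩
  simp [(hfix ⟨y, hy⟩).1]

/-- If `K ⊆ L` are compact Hausdorff spaces and `S : C(K) → C(L)` is a lattice
homomorphism with `S(f)|_K = f`, represented as a weighted composition operator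
`S(f)(y) = w(y)·f(π(y))`, then `w ≡ 1` and `π = id` on `K`; consequently `K` is a
retract of the open set `{y : w y ≠ 0}`, i.e. a neighborhood retract of `L`. -/
theorem neighborhood_retract_of_lattice_section
    {L : Type*} [TopologicalSpace L] [CompactSpace L] [T2Space L]
    (K : Set L) (hK : IsCompact K)
    (S : C(↥K, ℝ) →ₗ[ℝ] C(L, ℝ))
    (hSlat : ∀ f g : C(↥K, ℝ), S (f ⊔ g) = S f ⊔ S g)
    (w : C(L, ℝ)) (hw : ∀ y : L, 0 ≤ w y)
    (π : L → ↥K)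
    (hπcont : ContinuousOn (fun y => (π y : L)) {y : L | w y ≠ 0})
    (hrep : ∀ (f : C(↥K, ℝ)) (y : L), S f y = w y * f (π y))
    (hsection : ∀ (f : C(↥K, ℝ)) (x : ↥K), S f (x : L) = f x) :
    (∀ x : ↥K, w (x : L) = 1 ∧ π (x : L) = x) ∧
    (IsOpen {y : L | w y ≠ 0} ∧ K ⊆ {y : L | w y ≠ 0} ∧
      ContinuousOn (fun y => (π y : L)) {y : L | w y ≠ 0} ∧
      (∀ y ∈ {y : L | w y ≠ 0}, (π y : L) ∈ K) ∧
      (∀ x : ↥K, (π (x : L) : L) = (x : L))) :=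
  neighborhood_retract_of_lattice_section_general K S w π hπcont hrep hsection
end

section
/- Let $K$ be a compact Hausdorff space and suppose there exist an open set $V$ in $(B_{C(K)^*}, w^*)$ with $K\subseteq V$ and a continuous retraction $r: V\to K$ with $r|_K=\mathrm{id}_K$ (where $K$ is identified with the evaluation functionals in $B_{C(K)^*}$). Then $K$ can be written as a finite union of pathwise connected closed subsets. -/
/-!
Around each point `t` of `K`, local convexity and regularity of the weak* topology give a convex
open `W ∋ ι t` whose closure stays inside `U`. Then `closure W ∩ B` is compact and convex, so its
image under `r` is closed and path connected, and it contains the neighbourhood `ι⁻¹' W` of `t`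
because `r ∘ ι = id`. Compactness of `K` leaves finitely many of these sets.
-/

open scoped Topology
open Set

section LocallyConvex

variable {X : Type*} [AddCommGroup X] [Module ℝ X] [TopologicalSpace X]
  [IsTopologicalAddGroup X] [ContinuousSMul ℝ X] [LocallyConvexSpace ℝ X]

theorem exists_isOpen_convex_mem_closure_subset {U : Set X} {x : X} (hU : U ∈ 𝓝 x) :
    ∃ W, IsOpen W ∧ Convex ℝ W ∧ x ∈ W ∧ closure W ⊆ U := by
  obtain ⟨T, hT, hTclosed, hTU⟩ := exists_mem_nhds_isClosed_subset hU
  obtain ⟨W, ⟨hWx, hWconv⟩, hWT⟩ := (LocallyConvexSpace.convex_basis (𝕜 := ℝ) x).mem_iff.mp hT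
  exact ⟨interior W, isOpen_interior, hWconv.interior, mem_interior_iff_mem_nhds.mpr hWx,
    (closure_minimal (interior_subset.trans hWT) hTclosed).trans hTU⟩

theorem exists_isClosed_isPathConnected_mem_nhds_of_retract
    {K : Type*} [TopologicalSpace K] [T2Space K] {ι : K → X} (hι : Continuous ι)
    {B U : Set X} (hB : IsCompact B) (hBconv : Convex ℝ B) (hU : IsOpen U)
    (hιUB : ∀ t, ι t ∈ U ∩ B) {r : X → K} (hr : ContinuousOn r (U ∩ B))
    (hrι : Function.LeftInverse r ι) (t : K) :
    ∃ C : Set K, (IsClosed C ∧ IsPathConnected C) ∧ C ∈ 𝓝 t := by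
  obtain ⟨W, hWopen, hWconv, htW, hWU⟩ :=
    exists_isOpen_convex_mem_closure_subset (hU.mem_nhds (hιUB t).1)
  have hrS : ContinuousOn r (closure W ∩ B) := hr.mono (inter_subset_inter_left B hWU)
  refine ⟨r '' (closure W ∩ B), ⟨?_, ?_⟩, ?_⟩
  · exact ((hB.inter_left isClosed_closure).image_of_continuousOn hrS).isClosed
  · exact ((hWconv.closure.inter hBconv).isPathConnected
      ⟨ι t, subset_closure htW, (hιUB t).2⟩).image' hrS
  · refine Filter.mem_of_superset ((hWopen.preimage hι).mem_nhds htW) fun s hs => ?_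
    exact ⟨ι s, ⟨subset_closure hs, (hιUB s).2⟩, hrι s⟩

end LocallyConvex

theorem CompactSpace.exists_fin_cover_of_forall_mem_nhds {K : Type*} [TopologicalSpace K]
    [CompactSpace K] (P : Set K → Prop) (h : ∀ t, ∃ C, P C ∧ C ∈ 𝓝 t) :
    ∃ (n : ℕ) (C : Fin n → Set K), (∀ i, P (C i)) ∧ ⋃ i, C i = univ := by
  choose C hPC hC using h
  obtain ⟨T, hT⟩ := CompactSpace.elim_nhds_subcover C hC
  refine ⟨T.card, fun i => C (T.equivFin.symm i), fun i => hPC _, ?_⟩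
  rw [T.equivFin.symm.surjective.iUnion_comp (fun t : T => C t), iUnion_subtype]
  exact hT

theorem WeakDual.setOf_forall_abs_le_norm_eq_preimage_closedBall {E : Type*}
    [SeminormedAddCommGroup E] [NormedSpace ℝ E] :
    {φ : WeakDual ℝ E | ∀ f, |φ f| ≤ ‖f‖} = toStrongDual ⁻¹' Metric.closedBall 0 1 := by
  ext φ
  simp [ContinuousLinearMap.opNorm_le_iff zero_le_one, ← Real.norm_eq_abs]

/-- If a compact Hausdorff space `K` (identified with the evaluation functionals in the
closed dual unit ball of `C(K)` with the weak* topology) is a neighborhood retract of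
that ball, then `K` is a finite union of pathwise connected closed subsets. -/
theorem finite_union_path_connected_of_retract_of_dual_ball
    {K : Type*} [TopologicalSpace K] [CompactSpace K] [T2Space K]
    (ι : K → WeakDual ℝ C(K, ℝ))
    (hι : ∀ (t : K) (h : C(K, ℝ)), ι t h = h t)
    (B : Set (WeakDual ℝ C(K, ℝ)))
    (hB : B = {φ : WeakDual ℝ C(K, ℝ) | ∀ f : C(K, ℝ), |φ f| ≤ ‖f‖})
    (V : Set (WeakDual ℝ C(K, ℝ)))
    (hVopen : ∃ U : Set (WeakDual ℝ C(K, ℝ)), IsOpen U ∧ V = U ∩ B)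
    (hKV : Set.range ι ⊆ V)
    (r : WeakDual ℝ C(K, ℝ) → K)
    (hr : ContinuousOn r V)
    (hretr : ∀ t : K, r (ι t) = t) :
    ∃ (n : ℕ) (C : Fin n → Set K),
      (∀ i, IsClosed (C i) ∧ IsPathConnected (C i)) ∧ (⋃ i, C i) = Set.univ := by
  obtain ⟨U, hUopen, rfl⟩ := hVopen
  have : LocallyConvexSpace ℝ (WeakDual ℝ C(K, ℝ)) := WeakBilin.locallyConvexSpace
  have hιcont : Continuous ι :=
    WeakDual.continuous_of_continuous_eval fun f => by simpa only [hι] using f.continuous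
  rw [WeakDual.setOf_forall_abs_le_norm_eq_preimage_closedBall] at hB
  subst hB
  exact CompactSpace.exists_fin_cover_of_forall_mem_nhds _ <|
    exists_isClosed_isPathConnected_mem_nhds_of_retract hιcont
      (WeakDual.isCompact_closedBall 0 1)
      ((convex_closedBall (0 : StrongDual ℝ C(K, ℝ)) 1).linear_preimage
        WeakDual.toStrongDual.toLinearMap)
      hUopen (fun t => hKV ⟨t, rfl⟩) hr hretr
end

section
/- Let $E$ be a Banach space and let $H_0[E]$ denote the space of positively homogeneous functions $f:E^*\to\mathbb{R}$ with $\|f\|_{FBL[E]}:=\sup\{\sum_{i=1}^n |f(x_i^*)| : n\in\mathbb{N},\ x_1^*,\dots,x_n^*\in E^*,\ \sup_{x\in B_E}\sum_{i=1}^n|x_i^*(x)|\le 1\}<\infty$. Then $\|\cdot\|_{FBL[E]}$ is a norm on $H_0[E]$, and for each $x\in E$ the evaluation map $\delta_E(x): E^*\to\mathbb{R}$, $x^*\mapsto x^*(x)$, belongs to $H_0[E]$ with $\|\delta_E(x)\|_{FBL[E]}=\|x\|_E$; that is, $\delta_E: E\to H_0[E]$ is a linear isometry. -/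
/-!
A single functional `x*` with `‖x*‖ ≤ 1` is an admissible family, so `|f x*| ≤ ‖x*‖ ‖f‖_{FBL}`
by positive homogeneity; this gives definiteness. For `δ_E(x)`, rescaling `x` into the unit ball
bounds every admissible sum `∑ |x_i^*(x)|` by `‖x‖`, and a Hahn–Banach norming functional of `x`
attains this bound.
-/

open Finset

variable {E : Type*} [NormedAddCommGroup E] [NormedSpace ℝ E]

def PositivelyHomogeneous (f : (E →L[ℝ] ℝ) → ℝ) : Prop :=
  ∀ (c : ℝ), 0 < c → ∀ xstar : E →L[ℝ] ℝ, f (c • xstar) = c * f xstar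

/-- The set of sums `∑ i |f(x_i^*)|` over finite families with
`sup_{x ∈ B_E} ∑ i |x_i^*(x)| ≤ 1`, whose supremum is the `FBL[E]`-norm of `f`. -/
def fblNormSet (f : (E →L[ℝ] ℝ) → ℝ) : Set ℝ :=
  {s : ℝ | ∃ (n : ℕ) (xstar : Fin n → E →L[ℝ] ℝ),
    (∀ x : E, ‖x‖ ≤ 1 → ∑ i, |xstar i x| ≤ 1) ∧ s = ∑ i, |f (xstar i)|}

/-- `H₀[E]`: positively homogeneous functions with finite `FBL[E]`-norm. -/
def memH0 (f : (E →L[ℝ] ℝ) → ℝ) : Prop :=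
  PositivelyHomogeneous f ∧ BddAbove (fblNormSet f)

/-- The `FBL[E]`-norm. -/
noncomputable def fblNorm (f : (E →L[ℝ] ℝ) → ℝ) : ℝ := sSup (fblNormSet f)

open Pointwise

namespace PositivelyHomogeneous

variable {f g : (E →L[ℝ] ℝ) → ℝ}

theorem map_zero (hf : PositivelyHomogeneous f) : f 0 = 0 := by
  have h := hf 2 two_pos 0
  rw [smul_zero] at h
  linarith

theorem apply_eq_norm_mul (hf : PositivelyHomogeneous f) (y : E →L[ℝ] ℝ) :
    f y = ‖y‖ * f (‖y‖⁻¹ • y) := by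
  rcases eq_or_ne y 0 with rfl | hy
  · simp [hf.map_zero]
  · have hny : ‖y‖ ≠ 0 := norm_ne_zero_iff.mpr hy
    rw [← hf ‖y‖ (norm_pos_iff.mpr hy), smul_smul, mul_inv_cancel₀ hny, one_smul]

theorem add (hf : PositivelyHomogeneous f) (hg : PositivelyHomogeneous g) :
    PositivelyHomogeneous (f + g) := fun c hc y => by
  simp only [Pi.add_apply, hf c hc y, hg c hc y, mul_add]

theorem const_smul (hf : PositivelyHomogeneous f) (a : ℝ) :
    PositivelyHomogeneous (a • f) := fun c hc y => by
  simp only [Pi.smul_apply, smul_eq_mul, hf c hc y, mul_left_comm]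

theorem eval (x : E) : PositivelyHomogeneous (fun xstar : E →L[ℝ] ℝ => xstar x) :=
  fun _ _ _ => rfl

end PositivelyHomogeneous

section fblNormSet

variable {f g : (E →L[ℝ] ℝ) → ℝ}

theorem zero_mem_fblNormSet (f : (E →L[ℝ] ℝ) → ℝ) : (0 : ℝ) ∈ fblNormSet f :=
  ⟨0, fun _ => 0, by simp, by simp⟩

theorem abs_apply_mem_fblNormSet {y : E →L[ℝ] ℝ} (hy : ‖y‖ ≤ 1) :
    |f y| ∈ fblNormSet f := by
  refine ⟨1, fun _ => y, fun x hx => ?_, by simp⟩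
  calc ∑ _ : Fin 1, |y x| = ‖y x‖ := by simp
    _ ≤ ‖y‖ * ‖x‖ := y.le_opNorm x
    _ ≤ 1 := mul_le_one₀ hy (norm_nonneg x) hx

theorem fblNormSet_smul (a : ℝ) (f : (E →L[ℝ] ℝ) → ℝ) :
    fblNormSet (a • f) = |a| • fblNormSet f := by
  have hsum : ∀ (n : ℕ) (xstar : Fin n → E →L[ℝ] ℝ),
      ∑ i, |(a • f) (xstar i)| = |a| * ∑ i, |f (xstar i)| := fun n xstar => by
    simp only [Pi.smul_apply, smul_eq_mul, abs_mul, Finset.mul_sum]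
  ext s
  constructor
  · rintro ⟨n, xstar, hx, rfl⟩
    exact ⟨_, ⟨n, xstar, hx, rfl⟩, (hsum n xstar).symm⟩
  · rintro ⟨t, ⟨n, xstar, hx, rfl⟩, rfl⟩
    exact ⟨n, xstar, hx, (hsum n xstar).symm⟩

theorem forall_mem_fblNormSet_add_le (hf : BddAbove (fblNormSet f))
    (hg : BddAbove (fblNormSet g)) : ∀ s ∈ fblNormSet (f + g), s ≤ fblNorm f + fblNorm g := by
  rintro s ⟨n, xstar, hx, rfl⟩
  calc ∑ i, |(f + g) (xstar i)| ≤ ∑ i, (|f (xstar i)| + |g (xstar i)|) :=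
        sum_le_sum fun i _ => abs_add_le _ _
    _ = ∑ i, |f (xstar i)| + ∑ i, |g (xstar i)| := sum_add_distrib
    _ ≤ fblNorm f + fblNorm g :=
        add_le_add (le_csSup hf ⟨n, xstar, hx, rfl⟩) (le_csSup hg ⟨n, xstar, hx, rfl⟩)

theorem sum_abs_apply_le_norm {n : ℕ} {xstar : Fin n → E →L[ℝ] ℝ}
    (h : ∀ x : E, ‖x‖ ≤ 1 → ∑ i, |xstar i x| ≤ 1) (x : E) :
    ∑ i, |xstar i x| ≤ ‖x‖ := by
  rcases eq_or_ne x 0 with rfl | hx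
  · simp
  have hnx : 0 < ‖x‖ := norm_pos_iff.mpr hx
  have hunit : ‖‖x‖⁻¹ • x‖ ≤ 1 := (norm_smul_inv_norm (𝕜 := ℝ) hx).le
  have hscale : ∑ i, |xstar i (‖x‖⁻¹ • x)| = ‖x‖⁻¹ * ∑ i, |xstar i x| := by
    simp only [map_smul, smul_eq_mul, abs_mul, abs_inv, abs_norm, Finset.mul_sum]
  have := h _ hunit
  rwa [hscale, inv_mul_le_iff₀ hnx, mul_one] at this

theorem isGreatest_fblNormSet_eval (x : E) :
    IsGreatest (fblNormSet fun xstar : E →L[ℝ] ℝ => xstar x) ‖x‖ := by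
  refine ⟨?_, ?_⟩
  · obtain ⟨g, hg, hgx⟩ := exists_dual_vector'' ℝ x
    simpa [hgx] using abs_apply_mem_fblNormSet (f := fun xstar : E →L[ℝ] ℝ => xstar x) hg
  · rintro s ⟨n, xstar, hx, rfl⟩
    exact sum_abs_apply_le_norm hx x

end fblNormSet

section fblNorm

variable {f g : (E →L[ℝ] ℝ) → ℝ}

theorem fblNorm_nonneg (hf : BddAbove (fblNormSet f)) : 0 ≤ fblNorm f :=
  le_csSup hf (zero_mem_fblNormSet f)

theorem abs_apply_le_norm_mul_fblNorm (hf : memH0 f) (y : E →L[ℝ] ℝ) :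
    |f y| ≤ ‖y‖ * fblNorm f := by
  rcases eq_or_ne y 0 with rfl | hy
  · simp [hf.1.map_zero]
  have hunit : ‖‖y‖⁻¹ • y‖ ≤ 1 := (norm_smul_inv_norm (𝕜 := ℝ) hy).le
  rw [hf.1.apply_eq_norm_mul, abs_mul, abs_norm]
  exact mul_le_mul_of_nonneg_left (le_csSup hf.2 (abs_apply_mem_fblNormSet hunit))
    (norm_nonneg y)

theorem eq_zero_of_fblNorm_eq_zero (hf : memH0 f) (h : fblNorm f = 0) : f = 0 :=
  funext fun y => abs_nonpos_iff.mp <| by simpa [h] using abs_apply_le_norm_mul_fblNorm hf y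

theorem memH0.add (hf : memH0 f) (hg : memH0 g) : memH0 (f + g) :=
  ⟨hf.1.add hg.1, ⟨_, forall_mem_fblNormSet_add_le hf.2 hg.2⟩⟩

theorem fblNorm_add_le (hf : BddAbove (fblNormSet f)) (hg : BddAbove (fblNormSet g)) :
    fblNorm (f + g) ≤ fblNorm f + fblNorm g :=
  csSup_le ⟨0, zero_mem_fblNormSet _⟩ (forall_mem_fblNormSet_add_le hf hg)

theorem memH0.const_smul (hf : memH0 f) (a : ℝ) : memH0 (a • f) :=
  ⟨hf.1.const_smul a, fblNormSet_smul a f ▸ hf.2.smul_of_nonneg (abs_nonneg a)⟩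

theorem fblNorm_smul (a : ℝ) (f : (E →L[ℝ] ℝ) → ℝ) : fblNorm (a • f) = |a| * fblNorm f := by
  rw [fblNorm, fblNormSet_smul, Real.sSup_smul_of_nonneg (abs_nonneg a), smul_eq_mul, fblNorm]

theorem memH0_eval (x : E) : memH0 fun xstar : E →L[ℝ] ℝ => xstar x :=
  ⟨PositivelyHomogeneous.eval x, (isGreatest_fblNormSet_eval x).bddAbove⟩

theorem fblNorm_eval (x : E) : fblNorm (fun xstar : E →L[ℝ] ℝ => xstar x) = ‖x‖ :=
  (isGreatest_fblNormSet_eval x).csSup_eq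

end fblNorm

/-- `‖·‖_{FBL[E]}` is a norm on `H₀[E]`, and `δ_E : E → H₀[E]`, sending `x` to the
evaluation `x* ↦ x*(x)`, is a linear isometry. -/
theorem fblNorm_is_norm_and_delta_isometry :
    (∀ f : (E →L[ℝ] ℝ) → ℝ, memH0 f → 0 ≤ fblNorm f) ∧
    (∀ f : (E →L[ℝ] ℝ) → ℝ, memH0 f → fblNorm f = 0 → f = 0) ∧
    (∀ f g : (E →L[ℝ] ℝ) → ℝ, memH0 f → memH0 g →
      memH0 (f + g) ∧ fblNorm (f + g) ≤ fblNorm f + fblNorm g) ∧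
    (∀ (c : ℝ) (f : (E →L[ℝ] ℝ) → ℝ), memH0 f →
      memH0 (c • f) ∧ fblNorm (c • f) = |c| * fblNorm f) ∧
    (∀ x : E, memH0 (fun xstar : E →L[ℝ] ℝ => xstar x) ∧
      fblNorm (fun xstar : E →L[ℝ] ℝ => xstar x) = ‖x‖) ∧
    (∀ (a : ℝ) (x y : E),
      (fun xstar : E →L[ℝ] ℝ => xstar (a • x + y)) =
        a • (fun xstar : E →L[ℝ] ℝ => xstar x) + (fun xstar : E →L[ℝ] ℝ => xstar y)) :=
  ⟨fun _ hf => fblNorm_nonneg hf.2,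
    fun _ hf => eq_zero_of_fblNorm_eq_zero hf,
    fun _ _ hf hg => ⟨hf.add hg, fblNorm_add_le hf.2 hg.2⟩,
    fun c f hf => ⟨hf.const_smul c, fblNorm_smul c f⟩,
    fun x => ⟨memH0_eval x, fblNorm_eval x⟩,
    fun a x y => funext fun xstar => by simp⟩
end

section
/- Let $E$ be a Banach space with a normalized 1-unconditional basis $(e_n)$ with biorthogonal functionals $(e_n^*)$. Let $(N_n)$ be a strictly increasing sequence of positive reals, and for each $n$ define $f_n: E^*\to[0,\infty)$ by $f_n(x^*)=(|x^*(e_n)|-N_n\max_{m<n}|x^*(e_m)|)^+\cdot\prod_{m>n} g_m(|x^*(e_m)|/|x^*(e_n)|)$ if $x^*(e_n)\ne 0$ and $f_n(x^*)=0$ otherwise, where each $g_m:[0,\infty)\to[0,1]$ is continuous decreasing with $g_m(t)=1$ for $t\le M_m$ and $g_m(t)=0$ for $t\ge N_m$ (and $M_m<N_m$). Then the functions $f_n$ are pairwise disjoint in the pointwise order: for $n<l$ and every $x^*\in E^*$, $\min(f_n(x^*), f_l(x^*))=0$. -/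
open Finset

/-!
If `f_l(x*) ≠ 0`, then `|x*(e_l)| > N_l · max_{m<l} |x*(e_m)| ≥ N_l |x*(e_n)|` for `n < l`, so the
ratio `|x*(e_l)| / |x*(e_n)|` is at least `N_l`. The factor `g_l` of that ratio, which occurs in the
product defining `f_n(x*)`, therefore vanishes, and so does `f_n(x*)`.
-/

/-- The function `f_n`, evaluated at a functional through the sequence `a m = |x*(e_m)|`. -/
noncomputable def buildingBlock (N : ℕ → ℝ) (g : ℕ → ℝ → ℝ) (a : ℕ → ℝ) (n : ℕ) : ℝ :=
  if a n = 0 then 0 else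
    max (a n - N n * sSup (a '' Set.Iio n)) 0 * ⨅ k : ℕ, ∏ m ∈ Ioc n (n + k), g m (a m / a n)

theorem iInf_prod_Ioc_eq_zero {b : ℕ → ℝ} (hb : ∀ m, 0 ≤ b m) {n l : ℕ} (hnl : n < l)
    (hl : b l = 0) : ⨅ k : ℕ, ∏ m ∈ Ioc n (n + k), b m = 0 := by
  have hprod : ∏ m ∈ Ioc n (n + (l - n)), b m = 0 :=
    prod_eq_zero (by simp [hnl, Nat.add_sub_cancel' hnl.le]) hl
  refine le_antisymm ?_ (Real.iInf_nonneg fun k => prod_nonneg fun m _ => hb m)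
  calc ⨅ k : ℕ, ∏ m ∈ Ioc n (n + k), b m
      ≤ ∏ m ∈ Ioc n (n + (l - n)), b m :=
        ciInf_le ⟨0, by rintro _ ⟨k, rfl⟩; exact prod_nonneg fun m _ => hb m⟩ (l - n)
    _ = 0 := hprod

section buildingBlock

variable {N : ℕ → ℝ} {g : ℕ → ℝ → ℝ} {a : ℕ → ℝ}

theorem buildingBlock_nonneg (ha : ∀ m, 0 ≤ a m) (hg : ∀ m t, 0 ≤ t → 0 ≤ g m t) (n : ℕ) :
    0 ≤ buildingBlock N g a n := by
  unfold buildingBlock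
  split_ifs
  · exact le_rfl
  · exact mul_nonneg (le_max_right _ _) <| Real.iInf_nonneg fun k =>
      prod_nonneg fun m _ => hg m _ (div_nonneg (ha m) (ha n))

theorem le_div_of_buildingBlock_ne_zero (ha : ∀ m, 0 ≤ a m) {n l : ℕ} (hnl : n < l)
    (hNl : 0 ≤ N l) (hn : a n ≠ 0) (hl : buildingBlock N g a l ≠ 0) : N l ≤ a l / a n := by
  have hl_pos : 0 < a l - N l * sSup (a '' Set.Iio l) := by
    unfold buildingBlock at hl
    split_ifs at hl
    · exact absurd rfl hl
    · by_contra! hle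
      exact hl (by rw [max_eq_right hle, zero_mul])
  have hsup : a n ≤ sSup (a '' Set.Iio l) :=
    le_csSup ((Set.finite_Iio l).image a).bddAbove ⟨n, hnl, rfl⟩
  rw [le_div_iff₀ ((ha n).lt_of_ne' hn)]
  nlinarith

theorem buildingBlock_eq_zero_of_lt (ha : ∀ m, 0 ≤ a m) (hg : ∀ m t, 0 ≤ t → 0 ≤ g m t)
    {n l : ℕ} (hnl : n < l) (hNl : 0 ≤ N l) (hgl : ∀ t, N l ≤ t → g l t = 0)
    (hl : buildingBlock N g a l ≠ 0) : buildingBlock N g a n = 0 := by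
  unfold buildingBlock
  split_ifs with hn
  · rfl
  · rw [iInf_prod_Ioc_eq_zero (fun m => hg m _ (div_nonneg (ha m) (ha n))) hnl
      (hgl _ (le_div_of_buildingBlock_ne_zero ha hnl hNl hn hl)), mul_zero]

theorem min_buildingBlock_eq_zero (ha : ∀ m, 0 ≤ a m) (hg : ∀ m t, 0 ≤ t → 0 ≤ g m t)
    {n l : ℕ} (hnl : n < l) (hNl : 0 ≤ N l) (hgl : ∀ t, N l ≤ t → g l t = 0) :
    min (buildingBlock N g a n) (buildingBlock N g a l) = 0 := by
  by_cases hl : buildingBlock N g a l = 0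
  · rw [hl, min_eq_right (buildingBlock_nonneg ha hg n)]
  · rw [buildingBlock_eq_zero_of_lt ha hg hnl hNl hgl hl,
      min_eq_left (buildingBlock_nonneg ha hg l)]

end buildingBlock

theorem fbl_building_blocks_pairwise_disjoint_general
    {E : Type*} [NormedAddCommGroup E] [NormedSpace ℝ E]
    (e : ℕ → E)
    (M N : ℕ → ℝ) (hMN : ∀ m, 0 < M m ∧ M m < N m)
    (g : ℕ → ℝ → ℝ)
    (hg01 : ∀ m t, 0 ≤ t → g m t ∈ Set.Icc (0 : ℝ) 1)
    (hgzero : ∀ m t, N m ≤ t → g m t = 0)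
    (f : ℕ → (E →L[ℝ] ℝ) → ℝ)
    (hdef : ∀ (n : ℕ) (xstar : E →L[ℝ] ℝ), f n xstar =
      if xstar (e n) = 0 then 0 else
        max (|xstar (e n)| - N n * sSup ((fun m => |xstar (e m)|) '' Set.Iio n)) 0 *
          ⨅ k : ℕ, ∏ m ∈ Finset.Ioc n (n + k), g m (|xstar (e m)| / |xstar (e n)|)) :
    ∀ n l : ℕ, n < l → ∀ xstar : E →L[ℝ] ℝ, min (f n xstar) (f l xstar) = 0 := by
  intro n l hnl xstar
  have hf : ∀ j, f j xstar = buildingBlock N g (fun m => |xstar (e m)|) j := fun j => by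
    simp only [hdef, buildingBlock, abs_eq_zero]
  rw [hf, hf]
  exact min_buildingBlock_eq_zero (fun m => abs_nonneg _) (fun m t ht => (hg01 m t ht).1) hnl
    ((hMN l).1.trans (hMN l).2).le (hgzero l)

/-- Disjointness of the functions `f_n` in the proof of the isometric lattice-lifting
property for Banach spaces with a normalized 1-unconditional basis:
`f_n(x*) = (|x*(e_n)| - N_n·max_{m<n}|x*(e_m)|)⁺ · ∏_{m>n} g_m(|x*(e_m)|/|x*(e_n)|)`
(with the infinite product being the decreasing limit, i.e. infimum, of the partial
products, and `f_n(x*) = 0` when `x*(e_n) = 0`). For `n < l` and every `x*`,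
`min (f_n(x*), f_l(x*)) = 0`. -/
theorem fbl_building_blocks_pairwise_disjoint
    {E : Type*} [NormedAddCommGroup E] [NormedSpace ℝ E] [CompleteSpace E]
    (e : ℕ → E) (hnorm : ∀ m, ‖e m‖ = 1)
    (estar : ℕ → E →L[ℝ] ℝ)
    (hbi : ∀ i j, estar i (e j) = if i = j then (1 : ℝ) else 0)
    (huncond : ∀ (m : ℕ) (a b : ℕ → ℝ), (∀ i, |a i| ≤ |b i|) →
      ‖∑ i ∈ Finset.range m, a i • e i‖ ≤ ‖∑ i ∈ Finset.range m, b i • e i‖)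
    (M N : ℕ → ℝ) (hNmono : StrictMono N) (hMN : ∀ m, 0 < M m ∧ M m < N m)
    (g : ℕ → ℝ → ℝ)
    (hgcont : ∀ m, Continuous (g m)) (hganti : ∀ m, Antitone (g m))
    (hg01 : ∀ m t, 0 ≤ t → g m t ∈ Set.Icc (0 : ℝ) 1)
    (hgone : ∀ m t, 0 ≤ t → t ≤ M m → g m t = 1)
    (hgzero : ∀ m t, N m ≤ t → g m t = 0)
    (f : ℕ → (E →L[ℝ] ℝ) → ℝ)
    (hdef : ∀ (n : ℕ) (xstar : E →L[ℝ] ℝ), f n xstar =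
      if xstar (e n) = 0 then 0 else
        max (|xstar (e n)| - N n * sSup ((fun m => |xstar (e m)|) '' Set.Iio n)) 0 *
          ⨅ k : ℕ, ∏ m ∈ Finset.Ioc n (n + k), g m (|xstar (e m)| / |xstar (e n)|)) :
    ∀ n l : ℕ, n < l → ∀ xstar : E →L[ℝ] ℝ, min (f n xstar) (f l xstar) = 0 :=
  fbl_building_blocks_pairwise_disjoint_general e M N hMN g hg01 hgzero f hdef
end

section
/- Let $X$, $Y$ be Banach lattices, let $Y$ be a sublattice of $X$ and let $P: X\to Y$ be a lattice homomorphism with $P|_Y=\mathrm{id}_Y$ (so $Y$ is lattice-complemented in $X$). If $X$ has the property that every surjective lattice homomorphism onto $X$ with a bounded linear right inverse also has a lattice homomorphism right inverse, then $Y$ has the same property. -/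
universe u

/-- A Banach lattice `W` has the lattice-lifting property if every lattice homomorphism
`π : Z → W` from a Banach lattice which admits a bounded linear right inverse also
admits a lattice homomorphism right inverse. -/
def HasLatticeLiftingProperty (W : Type u)
    [NormedAddCommGroup W] [Lattice W] [HasSolidNorm W] [IsOrderedAddMonoid W] [NormedSpace ℝ W] : Prop :=
  ∀ (Z : Type u) [NormedAddCommGroup Z] [Lattice Z] [HasSolidNorm Z] [IsOrderedAddMonoid Z] [NormedSpace ℝ Z] [CompleteSpace Z],
    ∀ π : Z →L[ℝ] W, (∀ a b : Z, π (a ⊔ b) = π a ⊔ π b) →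
      (∃ T : W →L[ℝ] Z, ∀ w : W, π (T w) = w) →
      ∃ T' : W →L[ℝ] Z, (∀ a b : W, T' (a ⊔ b) = T' a ⊔ T' b) ∧ ∀ w : W, π (T' w) = w

/-- The product of two normed lattice groups is a normed lattice group (sup norm). -/
noncomputable instance Prod.normedLatticeAddCommGroup
    {α β : Type*} [NormedAddCommGroup α] [Lattice α] [HasSolidNorm α]
    [NormedAddCommGroup β] [Lattice β] [HasSolidNorm β] :
    HasSolidNorm (α × β) where
  solid a b h := by
    have h1 : |a.1| ≤ |b.1| := h.1
    have h2 : |a.2| ≤ |b.2| := h.2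
    simp only [Prod.norm_def]
    exact max_le_max (HasSolidNorm.solid h1) (HasSolidNorm.solid h2)

section Pullback

variable {X Y Z : Type u}
  [NormedAddCommGroup X] [Lattice X] [HasSolidNorm X] [IsOrderedAddMonoid X] [NormedSpace ℝ X]
  [NormedAddCommGroup Y] [Lattice Y] [HasSolidNorm Y] [IsOrderedAddMonoid Y] [NormedSpace ℝ Y]
  [NormedAddCommGroup Z] [Lattice Z] [HasSolidNorm Z] [IsOrderedAddMonoid Z] [NormedSpace ℝ Z]

/-- The pullback submodule `{(z, x) | π z = P x}`. -/
noncomputable def pullbackSub (π : Z →L[ℝ] Y) (P : X →L[ℝ] Y) : Submodule ℝ (Z × X) :=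
  LinearMap.ker (((π.comp (ContinuousLinearMap.fst ℝ Z X)
    - P.comp (ContinuousLinearMap.snd ℝ Z X)) : (Z × X) →L[ℝ] Y) : (Z × X) →ₗ[ℝ] Y)

lemma mem_pullbackSub {π : Z →L[ℝ] Y} {P : X →L[ℝ] Y} {p : Z × X} :
    p ∈ pullbackSub π P ↔ π p.1 = P p.2 := by
  simp [pullbackSub, LinearMap.mem_ker, sub_eq_zero]

lemma pullbackSub_closed (π : Z →L[ℝ] Y) (P : X →L[ℝ] Y) :
    IsClosed ((pullbackSub π P : Set (Z × X))) :=
  ContinuousLinearMap.isClosed_ker _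

end Pullback

/-- The lattice-lifting property passes to lattice-complemented sublattices: if `Y` is
(isometrically lattice) embedded in `X` via `j` and there is a lattice homomorphism
`P : X → Y` with `P ∘ j = id` (so `Y` is lattice-complemented in `X`), and `X` has the
lattice-lifting property, then so does `Y`. -/
theorem hasLatticeLiftingProperty_of_latticeComplemented
    (X Y : Type u)
    [NormedAddCommGroup X] [Lattice X] [HasSolidNorm X] [IsOrderedAddMonoid X] [NormedSpace ℝ X] [CompleteSpace X]
    [NormedAddCommGroup Y] [Lattice Y] [HasSolidNorm Y] [IsOrderedAddMonoid Y] [NormedSpace ℝ Y] [CompleteSpace Y]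
    (j : Y →L[ℝ] X) (hjlat : ∀ a b : Y, j (a ⊔ b) = j a ⊔ j b)
    (hjiso : ∀ y : Y, ‖j y‖ = ‖y‖)
    (P : X →L[ℝ] Y) (hPlat : ∀ a b : X, P (a ⊔ b) = P a ⊔ P b)
    (hPj : ∀ y : Y, P (j y) = y)
    (hX : HasLatticeLiftingProperty X) :
    HasLatticeLiftingProperty Y := by
  intro Z _ _ _ _ _ _ π hπlat ⟨T, hT⟩
  -- the pullback space
  set S : Submodule ℝ (Z × X) := pullbackSub π P with hS
  have memS : ∀ p : Z × X, p ∈ S ↔ π p.1 = P p.2 := fun p => mem_pullbackSub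
  -- closure under sup
  have supMem : ∀ a b : Z × X, a ∈ S → b ∈ S → a ⊔ b ∈ S := by
    intro a b ha hb
    rw [memS] at ha hb ⊢
    show π (a.1 ⊔ b.1) = P (a.2 ⊔ b.2)
    rw [hπlat, hPlat, ha, hb]
  have infMem : ∀ a b : Z × X, a ∈ S → b ∈ S → a ⊓ b ∈ S := by
    intro a b ha hb
    have h : -(-a ⊔ -b) ∈ S := S.neg_mem (supMem _ _ (S.neg_mem ha) (S.neg_mem hb))
    rwa [neg_sup, neg_neg, neg_neg] at h
  -- lattice structure on S
  letI : Lattice S :=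
    { (inferInstance : PartialOrder S) with
      sup := fun a b => ⟨a.1 ⊔ b.1, supMem _ _ a.2 b.2⟩
      le_sup_left := fun a b => (le_sup_left : a.1 ≤ a.1 ⊔ b.1)
      le_sup_right := fun a b => (le_sup_right : b.1 ≤ a.1 ⊔ b.1)
      sup_le := fun a b c hac hbc => (sup_le hac hbc : a.1 ⊔ b.1 ≤ c.1)
      inf := fun a b => ⟨a.1 ⊓ b.1, infMem _ _ a.2 b.2⟩
      inf_le_left := fun a b => (inf_le_left : a.1 ⊓ b.1 ≤ a.1)
      inf_le_right := fun a b => (inf_le_right : a.1 ⊓ b.1 ≤ b.1)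
      le_inf := fun a b c hab hac => (le_inf hab hac : a.1 ≤ b.1 ⊓ c.1) }
  have coe_sup : ∀ a b : S, ((a ⊔ b : S) : Z × X) = (a : Z × X) ⊔ (b : Z × X) :=
    fun a b => rfl
  have coe_abs : ∀ a : S, ((|a| : S) : Z × X) = |(a : Z × X)| := by
    intro a
    show ((a ⊔ -a : S) : Z × X) = (a : Z × X) ⊔ -(a : Z × X)
    rw [coe_sup]
    norm_num
  letI : IsOrderedAddMonoid S :=
    { add_le_add_left := fun a b h c => by
        have h' : (a : Z × X) ≤ (b : Z × X) := h
        show (a : Z × X) + (c : Z × X) ≤ (b : Z × X) + (c : Z × X)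
        exact add_le_add h' le_rfl }
  letI : HasSolidNorm S :=
    { solid := by
        intro a b h
        have h' : |(a : Z × X)| ≤ |(b : Z × X)| := by
          rw [← coe_abs, ← coe_abs]; exact h
        show ‖(a : Z × X)‖ ≤ ‖(b : Z × X)‖
        exact HasSolidNorm.solid h' }
  haveI : CompleteSpace S := (pullbackSub_closed π P).completeSpace_coe
  -- the projection onto X
  set ρ : S →L[ℝ] X := (ContinuousLinearMap.snd ℝ Z X).comp S.subtypeL with hρ
  have hρdef : ∀ s : S, ρ s = (s : Z × X).2 := fun s => rfl
  have hρlat : ∀ a b : S, ρ (a ⊔ b) = ρ a ⊔ ρ b := fun a b => rfl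
  -- linear right inverse of ρ
  have hTS : ∀ x : X, ((T (P x), x) : Z × X) ∈ S := by
    intro x; rw [memS]; exact hT (P x)
  set U : X →L[ℝ] S :=
    ((T.comp P).prod (ContinuousLinearMap.id ℝ X)).codRestrict S hTS with hU
  have hρU : ∀ x : X, ρ (U x) = x := fun x => rfl
  obtain ⟨V, hVlat, hρV⟩ := hX S ρ hρlat ⟨U, hρU⟩
  -- the lattice lifting for Y
  refine ⟨(ContinuousLinearMap.fst ℝ Z X).comp (S.subtypeL.comp (V.comp j)), ?_, ?_⟩
  · intro a b
    show ((V (j (a ⊔ b)) : Z × X)).1 = ((V (j a) : Z × X)).1 ⊔ ((V (j b) : Z × X)).1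
    rw [hjlat, hVlat, coe_sup]
    rfl
  · intro y
    show π ((V (j y) : Z × X)).1 = y
    have hmem : ((V (j y) : Z × X)) ∈ S := (V (j y)).2
    rw [memS] at hmem
    rw [hmem]
    have : ((V (j y) : Z × X)).2 = ρ (V (j y)) := rfl
    rw [this, hρV, hPj]
end

section
/- Let $\mu$ be a measure that is not purely atomic, and $1\le p<\infty$. Then the lattice homomorphisms $L_p(\mu)\to\mathbb{R}$ do not separate the points of $L_p(\mu)$: every lattice homomorphism $\phi: L_p(\mu)\to\mathbb{R}$ vanishes on all functions supported on the non-atomic part of the measure space. -/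
/-!
Since `f = f⁺ - f⁻`, we may take `f ≥ 0`. Suppose `φ f ≠ 0` and write `f_t` for the restriction
of `f` to `t`. For disjoint `t, t'` the pieces `f_t, f_t'` are disjoint in the lattice, so
`min (φ f_t) (φ f_t') = φ (f_t ⊓ f_t') = 0`. Hence `t ↦ φ f_t` only takes the values `0` and
`φ f`, and the family of sets `t ⊆ s` with `φ f_t = φ f` is closed under finite intersections
and, by continuity of `φ`, under decreasing countable ones. It therefore has a member `t` of
minimal norm `‖f_t‖ₚ`. Splitting `t` into two parts of positive measure, one of them is again in
the family but has smaller norm.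
-/

open MeasureTheory Filter Set
open scoped ENNReal Topology

theorem exists_mem_forall_le_of_inter_mem {α : Type*} {m : Set α → ℝ≥0∞} (hm : Monotone m)
    {T : Set (Set α)} (hT : T.Nonempty) (hinter : ∀ t ∈ T, ∀ t' ∈ T, t ∩ t' ∈ T)
    (hiInter : ∀ t : ℕ → Set α, Antitone t → (∀ n, t n ∈ T) → ⋂ n, t n ∈ T) :
    ∃ t ∈ T, ∀ t' ∈ T, m t ≤ m t' := by
  obtain ⟨u, -, hu, huT⟩ := exists_seq_tendsto_sInf (hT.image m) (OrderBot.bddBelow _)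
  choose s hsT hsu using huT
  have hmemT : ∀ n, ⋂ k ≤ n, s k ∈ T := by
    intro n
    induction n with
    | zero => simpa using hsT 0
    | succ n ih => rw [biInter_le_succ]; exact hinter _ ih _ (hsT _)
  have hanti : Antitone fun n => ⋂ k ≤ n, s k := fun _ _ hmn =>
    biInter_subset_biInter_left fun _ hk => le_trans hk hmn
  refine ⟨⋂ n, ⋂ k ≤ n, s k, hiInter _ hanti hmemT, fun t' ht' => ?_⟩
  calc m (⋂ n, ⋂ k ≤ n, s k) ≤ sInf (m '' T) :=
        ge_of_tendsto' hu fun n =>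
          hsu n ▸ hm ((iInter_subset _ n).trans (biInter_subset_of_mem (le_refl n)))
    _ ≤ m t' := sInf_le ⟨t', ht', rfl⟩

section LatticeHom

variable {E F : Type*} [Lattice E] [AddCommGroup E] [AddLeftMono E] [FunLike F E ℝ]
  [AddMonoidHomClass F E ℝ] {φ : F}

theorem map_inf_of_map_sup_s17 (hφ : ∀ x y, φ (x ⊔ y) = max (φ x) (φ y)) (x y : E) :
    φ (x ⊓ y) = min (φ x) (φ y) := by
  have h := congrArg φ (inf_add_sup x y)
  rw [map_add, map_add, hφ] at h
  linarith [min_add_max (φ x) (φ y)]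

theorem min_map_eq_zero_of_inf_eq_zero (hφ : ∀ x y, φ (x ⊔ y) = max (φ x) (φ y)) {x y : E}
    (h : x ⊓ y = 0) : min (φ x) (φ y) = 0 := by
  rw [← map_inf_of_map_sup_s17 hφ, h, map_zero]

end LatticeHom

namespace MeasureTheory.Lp

variable {α : Type*} [MeasurableSpace α] {μ : Measure α} {p : ℝ≥0∞}

noncomputable def indicator (f : Lp ℝ p μ) {t : Set α} (ht : MeasurableSet t) : Lp ℝ p μ :=
  ((Lp.memLp f).indicator ht).toLp _

variable (f : Lp ℝ p μ) {s t : Set α}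

theorem coeFn_indicator (ht : MeasurableSet t) : Lp.indicator f ht =ᵐ[μ] t.indicator f :=
  MemLp.coeFn_toLp _

theorem indicator_eq_self (ht : MeasurableSet t) (hft : ∀ᵐ a ∂μ, a ∉ t → f a = 0) :
    Lp.indicator f ht = f := by
  refine Lp.ext ((coeFn_indicator f ht).trans ?_)
  filter_upwards [hft] with a ha
  by_cases hat : a ∈ t
  · exact indicator_of_mem hat _
  · rw [indicator_of_notMem hat, ha hat]

theorem indicator_eq_zero (ht : MeasurableSet t) (hμt : μ t = 0) : Lp.indicator f ht = 0 := by
  refine Lp.ext ((coeFn_indicator f ht).trans ?_)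
  filter_upwards [measure_eq_zero_iff_ae_notMem.1 hμt, Lp.coeFn_zero ℝ p μ] with a ha h0
  rw [indicator_of_notMem ha, h0, Pi.zero_apply]

theorem indicator_union (hs : MeasurableSet s) (ht : MeasurableSet t) (hst : Disjoint s t) :
    Lp.indicator f (hs.union ht) = Lp.indicator f hs + Lp.indicator f ht := by
  refine Lp.ext ?_
  filter_upwards [coeFn_indicator f (hs.union ht), coeFn_indicator f hs, coeFn_indicator f ht,
    Lp.coeFn_add (Lp.indicator f hs) (Lp.indicator f ht)] with a h h₁ h₂ h₃
  rw [h, h₃, Pi.add_apply, h₁, h₂, indicator_union_of_disjoint hst]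

theorem indicator_inf_indicator (hf : 0 ≤ f) (hs : MeasurableSet s) (ht : MeasurableSet t)
    (hst : Disjoint s t) : Lp.indicator f hs ⊓ Lp.indicator f ht = 0 := by
  refine Lp.ext ?_
  filter_upwards [coeFn_indicator f hs, coeFn_indicator f ht, (Lp.coeFn_nonneg f).2 hf,
    Lp.coeFn_inf (Lp.indicator f hs) (Lp.indicator f ht), Lp.coeFn_zero ℝ p μ]
    with a h₁ h₂ hfa h h0
  rw [h, Pi.inf_apply, h₁, h₂, h0]
  by_cases has : a ∈ s
  · rw [indicator_of_notMem (disjoint_left.1 hst has)]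
    exact inf_eq_right.2 (indicator_nonneg (fun _ _ => hfa) a)
  · rw [indicator_of_notMem has]
    exact inf_eq_left.2 (indicator_nonneg (fun _ _ => hfa) a)

noncomputable def normPowMeasure : Measure α :=
  μ.withDensity fun a => ‖f a‖ₑ ^ p.toReal

theorem eLpNorm_indicator_eq (hp0 : p ≠ 0) (hp : p ≠ ∞) (ht : MeasurableSet t) :
    eLpNorm (t.indicator f) p μ = normPowMeasure f t ^ (1 / p.toReal) := by
  rw [eLpNorm_indicator_eq_eLpNorm_restrict ht, eLpNorm_eq_lintegral_rpow_enorm_toReal hp0 hp,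
    normPowMeasure, withDensity_apply _ ht]

theorem isFiniteMeasure_normPowMeasure (hp0 : p ≠ 0) (hp : p ≠ ∞) :
    IsFiniteMeasure (normPowMeasure f) := by
  constructor
  rw [normPowMeasure, withDensity_apply _ MeasurableSet.univ, Measure.restrict_univ]
  exact lintegral_rpow_enorm_lt_top_of_eLpNorm_lt_top hp0 hp (Lp.eLpNorm_lt_top f)

theorem normPowMeasure_eq_zero_iff (hp0 : p ≠ 0) (hp : p ≠ ∞) :
    normPowMeasure f t = 0 ↔ μ (Function.support f ∩ t) = 0 := by
  have hq : 0 < p.toReal := ENNReal.toReal_pos hp0 hp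
  rw [normPowMeasure, withDensity_apply_eq_zero
    ((Lp.stronglyMeasurable f).measurable.enorm.pow_const _)]
  congr! 3
  simp [hq, hq.not_gt, Function.support]

theorem normPowMeasure_lt (hp0 : p ≠ 0) (hp : p ≠ ∞) (ht : t ⊆ Function.support f)
    (hs : MeasurableSet s) (hst : s ⊆ t) (hμ : μ (t \ s) ≠ 0) :
    normPowMeasure f s < normPowMeasure f t := by
  have := isFiniteMeasure_normPowMeasure f hp0 hp
  have hpos : normPowMeasure f (t \ s) ≠ 0 := by
    rwa [Ne, normPowMeasure_eq_zero_iff f hp0 hp, inter_eq_right.2 (sdiff_subset.trans ht)]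
  rw [← union_eq_right.2 hst, ← measure_add_sdiff hs.nullMeasurableSet]
  exact ENNReal.lt_add_right (measure_ne_top _ _) hpos

variable [Fact (1 ≤ p)]

theorem tendsto_indicator_iInter (hp : p ≠ ∞) {t : ℕ → Set α} (ht : ∀ n, MeasurableSet (t n))
    (hanti : Antitone t) :
    Tendsto (fun n => Lp.indicator f (ht n)) atTop (𝓝 (Lp.indicator f (.iInter ht))) := by
  have hp0 : p ≠ 0 := (zero_lt_one.trans_le Fact.out).ne'
  have := isFiniteMeasure_normPowMeasure f hp0 hp
  have hdiff : ∀ n, MeasurableSet (t n \ ⋂ k, t k) := fun n => (ht n).diff (.iInter ht)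
  have hν : Tendsto (fun n => normPowMeasure f (t n \ ⋂ k, t k)) atTop (𝓝 0) := by
    have := tendsto_measure_iInter_atTop (μ := normPowMeasure f)
      (fun n => (hdiff n).nullMeasurableSet) (fun m n hmn => sdiff_subset_sdiff_left (hanti hmn))
      ⟨0, measure_ne_top _ _⟩
    have hempty : ⋂ n, (t n \ ⋂ k, t k) = ∅ := iInter_eq_empty_iff.2 fun a => by
      by_cases ha : a ∈ ⋂ k, t k
      · exact ⟨0, fun h => h.2 ha⟩
      · obtain ⟨k, hk⟩ := not_forall.1 (mem_iInter.not.1 ha)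
        exact ⟨k, fun h => hk h.1⟩
    rwa [hempty, measure_empty] at this
  unfold Lp.indicator
  rw [tendsto_Lp_iff_tendsto_eLpNorm'']
  simp_rw [← indicator_sdiff (iInter_subset t _), eLpNorm_indicator_eq f hp0 hp (hdiff _)]
  have hq : 0 < 1 / p.toReal := one_div_pos.2 (ENNReal.toReal_pos hp0 hp)
  simpa only [Function.comp_def, ENNReal.zero_rpow_of_pos hq] using
    (ENNReal.continuous_rpow_const (y := 1 / p.toReal)).tendsto 0 |>.comp hν

variable {φ : Lp ℝ p μ →L[ℝ] ℝ}

theorem map_indicator_iInter_eq {c : ℝ} (hp : p ≠ ∞) {t : ℕ → Set α}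
    (ht : ∀ n, MeasurableSet (t n)) (hanti : Antitone t)
    (htc : ∀ n, φ (Lp.indicator f (ht n)) = c) :
    φ (Lp.indicator f (.iInter ht)) = c :=
  tendsto_nhds_unique ((φ.continuous.tendsto _).comp (tendsto_indicator_iInter f hp ht hanti))
    (by simp only [Function.comp_def, htc, tendsto_const_nhds])

variable (hφ : ∀ f g, φ (f ⊔ g) = max (φ f) (φ g)) {f} (hf : 0 ≤ f)
include hφ hf

theorem map_indicator_eq_or_map_indicator_sdiff_eq {c : ℝ} (ht : MeasurableSet t)
    (hs : MeasurableSet s) (hst : s ⊆ t) (h : φ (Lp.indicator f ht) = c) :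
    φ (Lp.indicator f hs) = c ∨ φ (Lp.indicator f (ht.diff hs)) = c := by
  have hsplit : Lp.indicator f ht = Lp.indicator f hs + Lp.indicator f (ht.diff hs) := by
    rw [← indicator_union f hs (ht.diff hs) disjoint_sdiff_right]
    congr 1
    exact (union_sdiff_cancel hst).symm
  have hmin := min_map_eq_zero_of_inf_eq_zero hφ
    (indicator_inf_indicator f hf hs (ht.diff hs) disjoint_sdiff_right)
  rw [hsplit, map_add] at h
  rcases min_choice (φ (Lp.indicator f hs)) (φ (Lp.indicator f (ht.diff hs))) with hm | hm <;>
    rw [hm] at hmin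
  · exact .inr (by linarith)
  · exact .inl (by linarith)

theorem map_indicator_inter_eq {c : ℝ} (hc : c ≠ 0) (hs : MeasurableSet s) (ht : MeasurableSet t)
    (hsc : φ (Lp.indicator f hs) = c) (htc : φ (Lp.indicator f ht) = c) :
    φ (Lp.indicator f (hs.inter ht)) = c := by
  rcases map_indicator_eq_or_map_indicator_sdiff_eq hφ hf hs (hs.inter ht) inter_subset_left hsc
    with h | hs'
  · exact h
  rcases map_indicator_eq_or_map_indicator_sdiff_eq hφ hf ht (hs.inter ht) inter_subset_right htc
    with h | ht'
  · exact h
  have hdisj : Disjoint (s \ (s ∩ t)) (t \ (s ∩ t)) :=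
    disjoint_left.2 fun a has hat => has.2 ⟨has.1, hat.1⟩
  have := min_map_eq_zero_of_inf_eq_zero hφ
    (indicator_inf_indicator f hf (hs.diff (hs.inter ht)) (ht.diff (hs.inter ht)) hdisj)
  rw [hs', ht', min_self] at this
  exact absurd this hc

theorem map_eq_zero_of_nonneg_of_nonatomic (hp : p ≠ ∞) (hs : MeasurableSet s)
    (hnonatomic : ∀ t ⊆ s, MeasurableSet t → 0 < μ t →
      ∃ u ⊆ t, MeasurableSet u ∧ 0 < μ u ∧ μ u < μ t)
    (hfs : ∀ᵐ a ∂μ, a ∉ s → f a = 0) : φ f = 0 := by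
  by_contra hc
  have hp0 : p ≠ 0 := (zero_lt_one.trans_le Fact.out).ne'
  have := isFiniteMeasure_normPowMeasure f hp0 hp
  set S := s ∩ Function.support f
  have hS : MeasurableSet S := hs.inter (Lp.stronglyMeasurable f).measurableSet_support
  set T := {t | ∃ ht : MeasurableSet t, t ⊆ S ∧ φ (Lp.indicator f ht) = φ f}
  have hST : S ∈ T := by
    refine ⟨hS, subset_rfl, congrArg φ (indicator_eq_self f hS ?_)⟩
    filter_upwards [hfs] with a ha haS
    by_contra hfa
    exact haS ⟨not_not.1 (mt ha hfa), hfa⟩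
  obtain ⟨t, ⟨ht, htS, htc⟩, hmin⟩ := exists_mem_forall_le_of_inter_mem
    (m := normPowMeasure f) (fun _ _ => measure_mono) ⟨S, hST⟩
    (fun t ⟨ht, htS, htc⟩ t' ⟨ht', _, ht'c⟩ =>
      ⟨ht.inter ht', inter_subset_left.trans htS,
        map_indicator_inter_eq hφ hf hc ht ht' htc ht'c⟩)
    (fun t hanti hT => by
      choose ht htS htc using hT
      exact ⟨.iInter ht, (iInter_subset _ 0).trans (htS 0),
        map_indicator_iInter_eq f hp ht hanti htc⟩)
  have hμt : μ t ≠ 0 := fun h0 => hc (by rw [← htc, indicator_eq_zero f ht h0, map_zero])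
  obtain ⟨u, hut, hu, hμu, hμut⟩ :=
    hnonatomic t (htS.trans inter_subset_left) ht (pos_iff_ne_zero.2 hμt)
  have htf : t ⊆ Function.support f := htS.trans inter_subset_right
  have hμtu : μ (t \ u) ≠ 0 := fun h0 =>
    hμut.not_ge (tsub_eq_zero_iff_le.1 (le_zero_iff.1 (h0 ▸ le_measure_sdiff)))
  rcases map_indicator_eq_or_map_indicator_sdiff_eq hφ hf ht hu hut htc with h | h
  · exact (hmin u ⟨hu, hut.trans htS, h⟩).not_gt (normPowMeasure_lt f hp0 hp htf hu hut hμtu)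
  · refine (hmin _ ⟨ht.diff hu, sdiff_subset.trans htS, h⟩).not_gt ?_
    refine normPowMeasure_lt f hp0 hp htf (ht.diff hu) sdiff_subset ?_
    rwa [sdiff_sdiff_cancel_left hut, ← pos_iff_ne_zero]

end MeasureTheory.Lp

/-- Real-valued lattice homomorphisms on `L_p(μ)` (`1 ≤ p < ∞`) vanish on all functions
supported on a non-atomic part `s` of the measure space; in particular, if `μ` is not
purely atomic, the lattice homomorphisms `L_p(μ) → ℝ` do not separate points. -/
theorem lattice_hom_vanishes_on_nonatomic_part
    {α : Type*} [MeasurableSpace α] (μ : Measure α)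
    (p : ℝ≥0∞) [Fact (1 ≤ p)] (hp : p ≠ ∞)
    (s : Set α) (hs : MeasurableSet s)
    (hnonatomic : ∀ t : Set α, t ⊆ s → MeasurableSet t → 0 < μ t →
      ∃ u : Set α, u ⊆ t ∧ MeasurableSet u ∧ 0 < μ u ∧ μ u < μ t)
    (φ : Lp ℝ p μ →L[ℝ] ℝ)
    (hφlat : ∀ f g : Lp ℝ p μ, φ (f ⊔ g) = max (φ f) (φ g))
    (f : Lp ℝ p μ) (hf : ∀ᵐ a ∂μ, a ∉ s → (f : α → ℝ) a = 0) :
    φ f = 0 := by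
  have hpos : ∀ᵐ a ∂μ, a ∉ s → ((f⁺ : Lp ℝ p μ) : α → ℝ) a = 0 := by
    filter_upwards [hf, Lp.coeFn_sup f 0, Lp.coeFn_zero ℝ p μ] with a ha hsup h0 has
    rw [posPart_def, hsup, Pi.sup_apply, ha has, h0, Pi.zero_apply, max_self]
  have hneg : ∀ᵐ a ∂μ, a ∉ s → ((f⁻ : Lp ℝ p μ) : α → ℝ) a = 0 := by
    filter_upwards [hf, Lp.coeFn_sup (-f) 0, Lp.coeFn_neg f, Lp.coeFn_zero ℝ p μ]
      with a ha hsup hneg h0 has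
    rw [negPart_def, hsup, Pi.sup_apply, hneg, Pi.neg_apply, ha has, h0, Pi.zero_apply, neg_zero,
      max_self]
  rw [← posPart_sub_negPart f, map_sub,
    Lp.map_eq_zero_of_nonneg_of_nonatomic hφlat (posPart_nonneg f) hp hs hnonatomic hpos,
    Lp.map_eq_zero_of_nonneg_of_nonatomic hφlat (negPart_nonneg f) hp hs hnonatomic hneg, sub_zero]
end
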